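/- Let X be an irreducible scheme whose underlying topological space has finite Krull (combinatorial) dimension, and let σ : X → X be a morphism of schemes. Then σ has a fixed point: there exists x ∈ X with σ(x) = x. -/

import Mathlib

open AlgebraicGeometry CategoryTheory TopologicalSpace

/-- Let `X` be an irreducible scheme whose underlying topological space has
finite Krull (combinatorial) dimension, and let `σ : X ⟶ X` be a morphism of schemes. Then `σ`
has a fixed point. -/
theorem exists_fixed_point_of_irreducible (X : Scheme) [IrreducibleSpace X]
    (hdim : topologicalKrullDim X < ⊤) (σ : X ⟶ X) :
    ∃ x : X, σ.base x = x := by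
  by_contra h
  push_neg at h
  set f : ℕ → X := fun n => (σ.base)^[n] (genericPoint X) with hf
  have hsucc : ∀ n, f (n + 1) = σ.base (f n) := fun n => Function.iterate_succ_apply' _ _ _
  have hspec : ∀ n, f n ⤳ f (n + 1) := by
    intro n
    induction n with
    | zero => simpa [hsucc, hf] using genericPoint_specializes (σ.base (genericPoint X))
    | succ n ih =>
      rw [hsucc, hsucc (n+1)]
      exact ih.map σ.base.hom.continuous
  have hne : ∀ n, f n ≠ f (n + 1) := fun n hn => h (f n) (by rw [← hsucc]; exact hn.symm)
  have hlt : ∀ n, (⟨closure {f (n+1)}, (isIrreducible_singleton.closure), isClosed_closure⟩ :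
      IrreducibleCloseds X) < ⟨closure {f n}, (isIrreducible_singleton.closure), isClosed_closure⟩ := by
    intro n
    constructor
    · exact (hspec n).closure_subset
    · intro hsub
      exact hne n (((hspec n).antisymm
        (specializes_iff_closure_subset.2 hsub)).eq)
  have hlt' : ∀ m n : ℕ, n = m + 1 →
      (⟨closure {f n}, isIrreducible_singleton.closure, isClosed_closure⟩ :
        IrreducibleCloseds X) < ⟨closure {f m}, isIrreducible_singleton.closure,
          isClosed_closure⟩ := by
    rintro m n rfl
    exact hlt m
  have key : ∀ N : ℕ, (N : WithBot ℕ∞) ≤ topologicalKrullDim X := by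
    intro N
    let p : LTSeries (IrreducibleCloseds X) :=
      ⟨N, fun i => ⟨closure {f (N - i)}, isIrreducible_singleton.closure, isClosed_closure⟩, by
        intro i
        simp only [Fin.coe_castSucc, Fin.val_succ]
        have hi : (i : ℕ) < N := i.2
        exact hlt' _ _ (by omega)⟩
    simpa [topologicalKrullDim] using Order.LTSeries.length_le_krullDim p
  cases hK : topologicalKrullDim X with
  | bot => have := key 0; rw [hK] at this; simp at this
  | coe d =>
    rw [hK, ← WithBot.coe_top, WithBot.coe_lt_coe] at hdim
    lift d to ℕ using hdim.ne
    have := key (d + 1)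
    rw [hK] at this
    have : (d : ℕ) + 1 ≤ d := by exact_mod_cast this
    omega
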